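/- Let n ≥ 3 and 2 ≤ k ≤ n with 2k ≥ n, and let Λ = (λ_1,…,λ_n) ∈ ℝ^n. If A_Λ ∈ Γ_k^+, then λ_i > 0 for every 1 ≤ i ≤ n; if A_Λ ∈ Γ̄_k^+, then λ_i ≥ 0 for every 1 ≤ i ≤ n. (This is the pointwise eigenvalue form of the statement that positive, respectively nonnegative, Γ_k-curvature for k ≥ n/2 implies positive, respectively nonnegative, Ricci curvature.) -/

import Mathlib

/-- The `k`-th elementary symmetric polynomial of `x : Fin n → ℝ`. -/
noncomputable def sigmaElem (n k : ℕ) (x : Fin n → ℝ) : ℝ :=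
  ∑ s ∈ Finset.univ.powersetCard k, ∏ i ∈ s, x i

/-- The Gårding cone `Γ_k^+ ⊆ ℝ^n`: the connected component of
`{σ_k > 0}` containing `(1, …, 1)`. -/
def GammaPlus (n k : ℕ) : Set (Fin n → ℝ) :=
  connectedComponentIn {x | 0 < sigmaElem n k x} (fun _ => 1)

/-- `A_Λ = Λ − (Σ_i λ_i / (2(n−1))) · (1,…,1)`. -/
noncomputable def ALam (n : ℕ) (Λ : Fin n → ℝ) : Fin n → ℝ :=
  fun i => Λ i - (∑ j, Λ j) / (2 * ((n : ℝ) - 1))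

/-!
Put `x = A_Λ`. Since `∑ xᵢ = (n - 2) / (2 (n - 1)) · ∑ λᵢ`, we have
`(n - 2) λᵢ = (n - 2) xᵢ + σ₁(x)`, so it suffices that `(n - 2) xᵢ + σ₁(x) > 0` on `Γ_k^+`;
the closed case follows by continuity.

On `Γ_k^+` all of `σ₁, …, σ_k` are positive, because `{σ_k > 0}` is covered by the disjoint open
sets `{σ₁, …, σ_k > 0}` and `{σ_j < 0 for some j ≤ k}`. This rests on a reduction by Rolle's
theorem: if `y ∈ ℝ^m` has `σ₁, …, σ_k ≥ 0` and `σ_k > 0`, the `(m - k)`-th derivative of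
`∏ (t + yᵢ)` has only real roots, all negative, so `y` has the same normalized means
`σ_j / (m choose j)`, `j ≤ k`, as some `k` positive numbers. For positive numbers
`k² e_k ≤ e₁ e_{k-1}` (that is, `(∑ sᵢ)(∑ 1/sᵢ) ≥ k²`), so the reduction gives
`k m σ_k ≤ (m - k + 1) σ₁ σ_{k-1}`. Applied to the vector `x' ∈ ℝ^(n-1)` obtained by deleting
a coordinate `xᵢ ≤ 0`, together with `σ_k(x) = σ_k(x') + xᵢ σ_{k-1}(x') > 0`, this yields
`n (k - 1) xᵢ + (n - k) σ₁(x) > 0`, which implies the claim when `2k ≥ n`.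
-/

open Polynomial

namespace Multiset

section CommSemiring

variable {R : Type*} [CommSemiring R]

theorem esymm_zero (s : Multiset R) : s.esymm 0 = 1 := by
  simp [esymm, powersetCard_zero_left]

theorem esymm_one (s : Multiset R) : s.esymm 1 = s.sum := by
  simp [esymm, powersetCard_one]

theorem esymm_cons_succ (a : R) (s : Multiset R) (j : ℕ) :
    (a ::ₘ s).esymm (j + 1) = s.esymm (j + 1) + a * s.esymm j := by
  simp [esymm, powersetCard_cons, sum_map_mul_left]

theorem esymm_eq_zero_of_card_lt {s : Multiset R} {j : ℕ} (h : card s < j) : s.esymm j = 0 := by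
  simp [esymm, powersetCard_eq_empty _ h]

theorem le_card_of_esymm_ne_zero {s : Multiset R} {j : ℕ} (h : s.esymm j ≠ 0) : j ≤ card s :=
  not_lt.mp fun hlt => h (esymm_eq_zero_of_card_lt hlt)

end CommSemiring

section OrderedSemiring

variable {R : Type*} [CommSemiring R] [PartialOrder R] [IsStrictOrderedRing R]

theorem esymm_nonneg {s : Multiset R} (hs : ∀ x ∈ s, 0 ≤ x) (j : ℕ) : 0 ≤ s.esymm j :=
  sum_nonneg fun _ hy => by
    obtain ⟨t, ht, rfl⟩ := mem_map.mp hy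
    exact prod_nonneg fun x hx => hs x (mem_of_le (mem_powersetCard.mp ht).1 hx)

theorem esymm_pos {s : Multiset R} (hs : ∀ x ∈ s, 0 < x) {j : ℕ} (hj : j ≤ card s) :
    0 < s.esymm j := by
  induction s using Multiset.induction_on generalizing j with
  | empty =>
    obtain rfl : j = 0 := by simpa using hj
    simp [esymm_zero]
  | cons a s ih =>
    rcases j with _ | j
    · simp [esymm_zero]
    · simp only [mem_cons, forall_eq_or_imp, card_cons] at hs hj
      rw [esymm_cons_succ]
      exact add_pos_of_nonneg_of_pos (esymm_nonneg (fun x hx => (hs.2 x hx).le) _)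
        (mul_pos hs.1 (ih hs.2 (by omega)))

end OrderedSemiring

section OrderedRing

variable {R : Type*} [CommRing R] [LinearOrder R] [IsStrictOrderedRing R]

theorem sq_card_mul_esymm_card_le {s : Multiset R} (hs : ∀ x ∈ s, 0 < x) :
    (card s : R) ^ 2 * s.esymm (card s) ≤ s.sum * s.esymm (card s - 1) := by
  induction s using Multiset.induction_on with
  | empty => simp
  | cons a t ih =>
    simp only [mem_cons, forall_eq_or_imp] at hs
    obtain ⟨ha, ht⟩ := hs
    rcases hm : card t with _ | m
    · simp [card_eq_zero.mp hm, esymm_zero, esymm_one]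
    · simp only [hm] at ih
      simp only [card_cons, hm, Nat.add_sub_cancel, esymm_cons_succ, sum_cons,
        esymm_eq_zero_of_card_lt (show card t < m + 1 + 1 by omega), zero_add]
      have hE : 0 < t.esymm (m + 1) := esymm_pos ht hm.ge
      have hF : 0 < t.esymm m := esymm_pos ht (by omega)
      have IH := ih ht
      push_cast at IH ⊢
      have key : 0 ≤ t.esymm m * ((a + t.sum) * (t.esymm (m + 1) + a * t.esymm m)
          - (m + 1 + 1) ^ 2 * (a * t.esymm (m + 1))) := by
        nlinarith [mul_le_mul_of_nonneg_left IH (mul_pos ha hF).le,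
          sq_nonneg (a * t.esymm m - (m + 1) * t.esymm (m + 1))]
      linarith [nonneg_of_mul_nonneg_right key hF]

theorem esymm_pos_of_esymm_cons_pos {a : R} {M : Multiset R} {k : ℕ} (ha : a ≤ 0)
    (h : ∀ j ≤ k, 0 < (a ::ₘ M).esymm j) : ∀ j ≤ k, 0 < M.esymm j := by
  intro j
  induction j with
  | zero => simp [esymm_zero]
  | succ j ih =>
    intro hj
    have hcons := h (j + 1) hj
    rw [esymm_cons_succ] at hcons
    have := mul_nonpos_of_nonpos_of_nonneg ha (ih (by omega)).le
    linarith

end OrderedRing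

end Multiset

namespace Polynomial

theorem Splits.iterate_derivative {p : ℝ[X]} (hp : p.Splits) (r : ℕ) :
    (derivative^[r] p).Splits := by
  induction r with
  | zero => exact hp
  | succ r ih =>
    rw [Function.iterate_succ_apply', splits_iff_card_roots]
    rw [splits_iff_card_roots] at ih
    have := card_roots_le_derivative (derivative^[r] p)
    have := (derivative (derivative^[r] p)).card_roots'
    have := natDegree_derivative_le (derivative^[r] p)
    omega

theorem natDegree_multiset_prod_X_add_C {R : Type*} [CommSemiring R] [Nontrivial R]
    (s : Multiset R) : (s.map fun r => X + C r).prod.natDegree = Multiset.card s := by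
  rw [natDegree_multiset_prod_of_monic _ fun f hf => by
    obtain ⟨r, -, rfl⟩ := Multiset.mem_map.mp hf
    exact monic_X_add_C r]
  simp [Multiset.map_map]

theorem eval_pos_of_coeff_nonneg {R : Type*} [CommSemiring R] [PartialOrder R]
    [IsStrictOrderedRing R] {p : R[X]} (hcoeff : ∀ i, 0 ≤ p.coeff i) (h0 : 0 < p.coeff 0)
    {r : R} (hr : 0 ≤ r) : 0 < p.eval r := by
  rw [eval_eq_sum_range]
  exact Finset.sum_pos' (fun i _ => mul_nonneg (hcoeff i) (pow_nonneg hr i))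
    ⟨0, by simp, by simpa using h0⟩

theorem Splits.exists_pos_coeff_eq_esymm {p : ℝ[X]} (hp : p.Splits)
    (hcoeff : ∀ i, 0 ≤ p.coeff i) (h0 : 0 < p.coeff 0) :
    ∃ s : Multiset ℝ, Multiset.card s = p.natDegree ∧ (∀ x ∈ s, 0 < x) ∧
      ∀ j ≤ p.natDegree, p.coeff (p.natDegree - j) = p.leadingCoeff * s.esymm j := by
  have hp0 : p ≠ 0 := fun h => h0.ne' (by simp [h])
  refine ⟨p.roots.map Neg.neg, by rw [Multiset.card_map, splits_iff_card_roots.mp hp], ?_, ?_⟩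
  · simp only [Multiset.mem_map]
    rintro _ ⟨r, hr, rfl⟩
    by_contra! hr0
    exact (eval_pos_of_coeff_nonneg hcoeff h0 (neg_nonpos.mp hr0)).ne' ((mem_roots hp0).mp hr)
  · intro j hj
    rw [coeff_eq_esymm_roots_of_splits hp (Nat.sub_le _ _), Multiset.esymm_neg,
      Nat.sub_sub_self hj, mul_assoc]

end Polynomial

namespace Multiset

theorem exists_pos_esymm_eq_of_esymm_nonneg {M : Multiset ℝ} {k : ℕ}
    (hnonneg : ∀ j ≤ k, 0 ≤ M.esymm j) (hpos : 0 < M.esymm k) :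
    ∃ s : Multiset ℝ, card s = k ∧ (∀ x ∈ s, 0 < x) ∧
      ∀ j ≤ k,
        ((card M - j).choose (k - j) : ℝ) * M.esymm j = (card M).choose k * s.esymm j := by
  set m := card M
  have hkm : k ≤ m := le_card_of_esymm_ne_zero hpos.ne'
  set Q := derivative^[m - k] (M.map fun r => X + C r).prod
  have hQcoeff : ∀ j ≤ k, Q.coeff (k - j) = (m - j).descFactorial (m - k) * M.esymm j := by
    intro j hj
    rw [coeff_iterate_derivative, nsmul_eq_mul, show k - j + (m - k) = m - j by omega,
      prod_X_add_C_coeff _ (by omega), show m - (m - j) = j by omega]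
  have hQk : Q.coeff k = m.descFactorial (m - k) := by
    simpa [esymm_zero] using hQcoeff 0 k.zero_le
  have hQdeg : Q.natDegree = k := by
    refine le_antisymm ?_ (le_natDegree_of_ne_zero ?_)
    · calc Q.natDegree ≤ _ := natDegree_iterate_derivative _ _
        _ = k := by rw [natDegree_multiset_prod_X_add_C]; omega
    · rw [hQk]
      exact_mod_cast (Nat.descFactorial_pos.mpr (Nat.sub_le m k)).ne'
  have hQnonneg : ∀ i, 0 ≤ Q.coeff i := by
    intro i
    rcases le_or_gt i k with hi | hi
    · rw [← Nat.sub_sub_self hi, hQcoeff _ (Nat.sub_le k i)]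
      exact mul_nonneg (Nat.cast_nonneg _) (hnonneg _ (Nat.sub_le k i))
    · rw [coeff_eq_zero_of_natDegree_lt (hQdeg ▸ hi)]
  have hQ0 : 0 < Q.coeff 0 := by
    rw [← Nat.sub_self k, hQcoeff k le_rfl]
    exact mul_pos (by exact_mod_cast Nat.descFactorial_pos.mpr le_rfl) hpos
  have hQsplit : Q.Splits :=
    (Splits.multisetProd fun f hf => by
      obtain ⟨r, -, rfl⟩ := mem_map.mp hf
      exact Splits.X_add_C r).iterate_derivative _
  obtain ⟨s, hcard, hspos, hs⟩ := hQsplit.exists_pos_coeff_eq_esymm hQnonneg hQ0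
  refine ⟨s, hQdeg ▸ hcard, hspos, fun j hj => ?_⟩
  have key := (hQcoeff j hj).symm.trans (hQdeg ▸ hs j (hQdeg ▸ hj))
  rw [leadingCoeff, hQdeg, hQk, Nat.descFactorial_eq_factorial_mul_choose,
    Nat.descFactorial_eq_factorial_mul_choose, Nat.choose_symm hkm,
    Nat.choose_symm_of_eq_add (show m - j = (m - k) + (k - j) by omega)] at key
  push_cast at key
  rw [mul_assoc, mul_assoc] at key
  exact mul_left_cancel₀ (by positivity) key

theorem esymm_pos_of_esymm_nonneg {M : Multiset ℝ} {k : ℕ}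
    (hnonneg : ∀ j ≤ k, 0 ≤ M.esymm j) (hpos : 0 < M.esymm k) :
    ∀ j ≤ k, 0 < M.esymm j := by
  obtain ⟨s, hcard, hspos, hs⟩ := exists_pos_esymm_eq_of_esymm_nonneg hnonneg hpos
  intro j hj
  have hC : (0 : ℝ) < (card M).choose k :=
    Nat.cast_pos.mpr (Nat.choose_pos (le_card_of_esymm_ne_zero hpos.ne'))
  refine pos_of_mul_pos_right ((hs j hj).symm ▸ mul_pos hC (esymm_pos hspos (hcard ▸ hj)))
    (Nat.cast_nonneg _)

theorem mul_esymm_le_esymm_one_mul_esymm {M : Multiset ℝ} {k : ℕ} (hk : 1 ≤ k)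
    (hpos : ∀ j ≤ k, 0 < M.esymm j) :
    k * card M * M.esymm k ≤ (card M - k + 1) * (M.esymm 1 * M.esymm (k - 1)) := by
  set m := card M
  have hkm : k ≤ m := le_card_of_esymm_ne_zero (hpos k le_rfl).ne'
  obtain ⟨s, hcard, hspos, hs⟩ :=
    exists_pos_esymm_eq_of_esymm_nonneg (fun j hj => (hpos j hj).le) (hpos k le_rfl)
  have hs_top := sq_card_mul_esymm_card_le hspos
  rw [hcard, ← esymm_one] at hs_top
  have h1 := hs 1 hk
  have hk1 := hs (k - 1) (Nat.sub_le k 1)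
  have hkk := hs k le_rfl
  rw [Nat.sub_sub_self hk, Nat.choose_one_right, Nat.cast_sub (by omega), Nat.cast_sub hk] at hk1
  rw [Nat.sub_self, Nat.choose_zero_right, Nat.cast_one, one_mul] at hkk
  have hchoose : (m : ℝ) * (m - 1).choose (k - 1) = m.choose k * k := by
    have := Nat.add_one_mul_choose_eq (m - 1) (k - 1)
    rw [Nat.sub_add_cancel (by omega), Nat.sub_add_cancel hk] at this
    exact_mod_cast this
  refine le_of_mul_le_mul_left ?_ (Nat.cast_pos.mpr (Nat.choose_pos (Nat.sub_le_sub_right hkm 1)))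
  calc ((m - 1).choose (k - 1) : ℝ) * (k * m * M.esymm k)
      = k * (m * (m - 1).choose (k - 1)) * M.esymm k := by ring
    _ = (m.choose k : ℝ) ^ 2 * (k ^ 2 * s.esymm k) := by rw [hchoose, hkk]; ring
    _ ≤ (m.choose k : ℝ) ^ 2 * (s.esymm 1 * s.esymm (k - 1)) := by gcongr
    _ = ((m - 1).choose (k - 1) : ℝ) * ((m - k + 1) * (M.esymm 1 * M.esymm (k - 1))) := by
      rw [sq, mul_mul_mul_comm, ← h1, ← hk1]; push_cast; ring

theorem neg_mul_sum_lt_mul_of_mem {N : Multiset ℝ} {k : ℕ} (hk : 2 ≤ k)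
    (hpos : ∀ j ≤ k, 0 < N.esymm j) {a : ℝ} (ha : a ∈ N) :
    -((card N - k) * N.sum) < card N * (k - 1) * a := by
  obtain ⟨M, rfl⟩ := exists_cons_of_mem ha
  have hkN : k ≤ card M + 1 := card_cons a M ▸ le_card_of_esymm_ne_zero (hpos k le_rfl).ne'
  have hsum : 0 < a + M.sum := sum_cons a M ▸ esymm_one (a ::ₘ M) ▸ hpos 1 (by omega)
  have hk2 : (2 : ℝ) ≤ k := by exact_mod_cast hk
  have hkN' : (k : ℝ) ≤ card M + 1 := by exact_mod_cast hkN
  rw [card_cons, sum_cons]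
  push_cast
  rcases lt_or_ge 0 a with ha0 | ha0
  · have : 0 < (card M + 1 : ℝ) * (k - 1) * a :=
      mul_pos (mul_pos (by positivity) (by linarith)) ha0
    nlinarith [mul_nonneg (by linarith : (0 : ℝ) ≤ card M + 1 - k) hsum.le]
  · have hM := esymm_pos_of_esymm_cons_pos ha0 hpos
    have hmac := mul_esymm_le_esymm_one_mul_esymm (by omega) hM
    rw [esymm_one] at hmac
    have htop := hpos k le_rfl
    rw [← Nat.sub_add_cancel (by omega : 1 ≤ k), esymm_cons_succ, Nat.sub_add_cancel (by omega)]
      at htop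
    have hkM : (0 : ℝ) < k * card M := by
      have : (k : ℝ) ≤ card M := by exact_mod_cast le_card_of_esymm_ne_zero (hM k le_rfl).ne'
      nlinarith
    have : 0 < M.esymm (k - 1) * ((card M - k + 1) * M.sum + k * card M * a) := by
      nlinarith [mul_pos hkM htop]
    have := pos_of_mul_pos_right this (hM (k - 1) (Nat.sub_le k 1)).le
    linarith

end Multiset

open Finset

theorem sigmaElem_eq_esymm (n j : ℕ) (x : Fin n → ℝ) :
    sigmaElem n j x = (univ.val.map x).esymm j :=
  (esymm_map_val x univ j).symm

theorem continuous_sigmaElem (n j : ℕ) : Continuous (sigmaElem n j) := by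
  unfold sigmaElem
  fun_prop

theorem gammaPlus_subset_sigmaElem_pos (n k : ℕ) :
    GammaPlus n k ⊆ {x | ∀ j ≤ k, 0 < sigmaElem n j x} := by
  set S := {x : Fin n → ℝ | ∀ j ≤ k, 0 < sigmaElem n j x}
  set V := ⋃ j ∈ Set.Iic k, {x : Fin n → ℝ | sigmaElem n j x < 0}
  have hcover : {x | 0 < sigmaElem n k x} ⊆ S ∪ V := by
    intro y hy
    by_cases hyV : y ∈ V
    · exact Or.inr hyV
    · simp only [V, Set.mem_iUnion, Set.mem_Iic, Set.mem_ofPred_eq, not_exists, not_lt] at hyV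
      refine Or.inl fun j hj => ?_
      simp only [sigmaElem_eq_esymm] at hy hyV ⊢
      exact Multiset.esymm_pos_of_esymm_nonneg hyV hy j hj
  have hS : IsOpen S := by
    simp only [S, Set.ofPred_forall]
    exact (Set.finite_Iic k).isOpen_biInter fun j _ =>
      isOpen_lt continuous_const (continuous_sigmaElem n j)
  have hV : IsOpen V :=
    isOpen_biUnion fun j _ => isOpen_lt (continuous_sigmaElem n j) continuous_const
  have hSV : Disjoint S V := by
    simp only [V, Set.disjoint_iUnion_right]
    exact fun j hj => Set.disjoint_left.mpr fun y hyS hyj => (hyS j hj).not_gt hyj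
  intro x hx
  have h1 : (fun _ => 1) ∈ {x | 0 < sigmaElem n k x} :=
    connectedComponentIn_nonempty_iff.mp ⟨x, hx⟩
  have h1V : (fun _ => (1 : ℝ)) ∉ V := by
    simp only [V, Set.mem_iUnion, Set.mem_ofPred_eq, not_exists, not_lt]
    exact fun j _ => by simp [sigmaElem]
  exact isPreconnected_connectedComponentIn.subset_left_of_subset_union hS hV hSV
    ((connectedComponentIn_subset _ _).trans hcover)
    ⟨_, mem_connectedComponentIn h1, (hcover h1).resolve_right h1V⟩ hx

theorem sub_two_mul_add_sum_pos_of_mem_gammaPlus {n k : ℕ} (hn : 3 ≤ n) (hk : 2 ≤ k)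
    (h2k : n ≤ 2 * k) {x : Fin n → ℝ} (hx : x ∈ GammaPlus n k) (i : Fin n) :
    0 < (n - 2 : ℝ) * x i + ∑ j, x j := by
  have hpos : ∀ j ≤ k, 0 < (univ.val.map x).esymm j := fun j hj =>
    sigmaElem_eq_esymm n j x ▸ gammaPlus_subset_sigmaElem_pos n k hx j hj
  have hcard : Multiset.card (univ.val.map x) = n := by simp
  have hbound := Multiset.neg_mul_sum_lt_mul_of_mem hk hpos (Multiset.mem_map_of_mem x (mem_univ i))
  have hsum := hpos 1 (by omega)
  rw [hcard, ← sum_eq_multiset_sum] at hbound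
  rw [Multiset.esymm_one, ← sum_eq_multiset_sum] at hsum
  have hkn : (k : ℝ) ≤ n := by
    exact_mod_cast hcard ▸ Multiset.le_card_of_esymm_ne_zero (hpos k le_rfl).ne'
  have : (n : ℝ) ≤ 2 * k := by exact_mod_cast h2k
  have : (2 : ℝ) ≤ k := by exact_mod_cast hk
  have : (3 : ℝ) ≤ n := by exact_mod_cast hn
  have hB := neg_lt_iff_pos_add.mp hbound
  have hscaled : 0 < n * (k - 1) * ((n - 2 : ℝ) * x i + ∑ j, x j) := by
    rw [show n * (k - 1) * ((n - 2 : ℝ) * x i + ∑ j, x j)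
        = (n - 2) * (n * (k - 1) * x i + (n - k) * ∑ j, x j)
          + (2 * k - n) * (n - 1) * ∑ j, x j by ring]
    exact add_pos_of_pos_of_nonneg (mul_pos (by linarith) hB)
      (mul_nonneg (mul_nonneg (by linarith) (by linarith)) hsum.le)
  exact pos_of_mul_pos_right hscaled (mul_nonneg (Nat.cast_nonneg n) (by linarith))

theorem sub_two_mul_ALam_add_sum {n : ℕ} (hn : n ≠ 1) (Λ : Fin n → ℝ) (i : Fin n) :
    (n - 2 : ℝ) * ALam n Λ i + ∑ j, ALam n Λ j = (n - 2) * Λ i := by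
  have : (n : ℝ) - 1 ≠ 0 := sub_ne_zero.mpr (by exact_mod_cast hn)
  simp only [ALam, sum_sub_distrib, sum_const, card_univ, Fintype.card_fin, nsmul_eq_mul]
  field_simp
  ring

theorem pos_of_gamma_k_big_general (n k : ℕ) (hn : 3 ≤ n) (hk : 2 ≤ k)
    (h2k : n ≤ 2 * k) (Λ : Fin n → ℝ) :
    (ALam n Λ ∈ GammaPlus n k → ∀ i, 0 < Λ i) ∧
    (ALam n Λ ∈ closure (GammaPlus n k) → ∀ i, 0 ≤ Λ i) := by
  have hn2 : (0 : ℝ) < n - 2 := by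
    have : (3 : ℝ) ≤ n := by exact_mod_cast hn
    linarith
  have hΛ := sub_two_mul_ALam_add_sum (by omega : n ≠ 1) Λ
  have hbound := fun x (hx : x ∈ GammaPlus n k) i =>
    sub_two_mul_add_sum_pos_of_mem_gammaPlus hn hk h2k hx i
  refine ⟨fun hA i => pos_of_mul_pos_right (hΛ i ▸ hbound _ hA i) hn2.le, fun hA i => ?_⟩
  have hclosed : IsClosed {x : Fin n → ℝ | 0 ≤ (n - 2 : ℝ) * x i + ∑ j, x j} :=
    isClosed_le continuous_const (by fun_prop)
  have hA' := closure_minimal (fun x hx => (hbound x hx i).le) hclosed hA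
  exact nonneg_of_mul_nonneg_right (hΛ i ▸ hA') hn2

/-- Theorem 1, pointwise eigenvalue form: for `k ≥ n/2`,
`A_Λ ∈ Γ_k^+` implies all `λ_i > 0`, and `A_Λ ∈ Γ̄_k^+` implies all `λ_i ≥ 0`. -/
theorem pos_of_gamma_k_big (n k : ℕ) (hn : 3 ≤ n) (hk : 2 ≤ k) (hkn : k ≤ n)
    (h2k : n ≤ 2 * k) (Λ : Fin n → ℝ) :
    (ALam n Λ ∈ GammaPlus n k → ∀ i, 0 < Λ i) ∧
    (ALam n Λ ∈ closure (GammaPlus n k) → ∀ i, 0 ≤ Λ i) :=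
  pos_of_gamma_k_big_general n k hn hk h2k Λ
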